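/- Let d, n, d_1, ..., d_n be positive integers and let L_j : ℝ^d → ℝ^{d_j} (1 ≤ j ≤ n) be surjective linear maps whose Hölder–Brascamp–Lieb polytope 𝒫 is nonempty, and let B : [0,∞)^n → [0,∞) be a Borel measurable HBL function for {L_j}. Suppose there exists c > 0 such that B(λ_1 y_1, ..., λ_n y_n) ≥ c · min_{s ∈ 𝒫} λ_1^{s_1}···λ_n^{s_n} · B(y_1,...,y_n) for all λ_j ≥ 1 and all 0 < y_j < ∞. Then there exists c' > 0 such that the same inequality (with c' in place of c) holds for all 0 < λ_j < ∞ and all 0 < y_j < ∞. -/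

import Mathlib

/-!
Testing the HBL inequality against `f_j = t_j · 1_{L_j(r K)}`, with `K` the unit ball and
`a_j = |L_j K|`, gives `r^d |K| B(t) ≤ C · B(t_j r^{d_j} a_j)`. Given `λ`, take `r` so small that
`β_j = r^{d_j} a_j ≤ λ_j`, and apply the hypothesis with the factors `λ_j / β_j ≥ 1` at the point
`β y`. Since `∑ s_j d_j = d` on `𝒫`, `∏ β_j^{s_j} = r^d ∏ a_j^{s_j} ≤ r^d M` for a constant `M`, so
`min_𝒫 λ^s ≤ r^d M · min_𝒫 (λ/β)^s`, and the powers of `r` cancel.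
-/

open MeasureTheory

noncomputable section

/-- The Hölder–Brascamp–Lieb polytope of a family of linear maps. -/
def HBLpolytope (d n : ℕ) (dj : Fin n → ℕ)
    (L : (j : Fin n) → (Fin d → ℝ) →ₗ[ℝ] (Fin (dj j) → ℝ)) : Set (Fin n → ℝ) :=
  {s | (∀ j, 0 ≤ s j) ∧ (∑ j, s j * (dj j : ℝ)) = (d : ℝ) ∧
    ∀ V : Submodule ℝ (Fin d → ℝ),
      (Module.finrank ℝ V : ℝ) ≤ ∑ j, s j * (Module.finrank ℝ (V.map (L j)) : ℝ)}

/-- `B : [0,∞)^n → [0,∞)` is an HBL function for the family `L`. -/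
def IsHBLFunction (d n : ℕ) (dj : Fin n → ℕ)
    (L : (j : Fin n) → (Fin d → ℝ) →ₗ[ℝ] (Fin (dj j) → ℝ))
    (B : (Fin n → ℝ) → ℝ) : Prop :=
  ∃ C : ℝ, ∀ f : (j : Fin n) → (Fin (dj j) → ℝ) → ℝ,
    (∀ j, ∀ y, 0 ≤ f j y) → (∀ j, Integrable (f j)) →
    ∫⁻ x : Fin d → ℝ, ENNReal.ofReal (B (fun j => f j (L j x)))
      ≤ ENNReal.ofReal (C * B (fun j => ∫ y, f j y))

open Pointwise Filter Topology

def infProdRpow {n : ℕ} (P : Set (Fin n → ℝ)) (lam : Fin n → ℝ) : ℝ :=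
  sInf ((fun s : Fin n → ℝ => ∏ j, lam j ^ s j) '' P)

lemma sInf_image_le_mul_sInf_image {α : Type*} {P : Set α} {f g : α → ℝ} {k : ℝ}
    (hk : 0 ≤ k) (hf : ∀ x ∈ P, 0 ≤ f x) (hfg : ∀ x ∈ P, f x ≤ k * g x) :
    sInf (f '' P) ≤ k * sInf (g '' P) := by
  rw [sInf_image', sInf_image', Real.mul_iInf_of_nonneg hk]
  exact ciInf_mono ⟨0, by rintro _ ⟨x, rfl⟩; exact hf x x.2⟩ fun x => hfg x x.2

lemma exists_pos_pow_mul_le {ι : Type*} [Finite ι] {m : ι → ℕ} (hm : ∀ i, 0 < m i)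
    (a : ι → ℝ) {b : ι → ℝ} (hb : ∀ i, 0 < b i) : ∃ r > 0, ∀ i, r ^ m i * a i ≤ b i := by
  have h : ∀ i, ∀ᶠ r in 𝓝[>] (0 : ℝ), r ^ m i * a i ≤ b i := fun i => by
    have : Tendsto (fun r : ℝ => r ^ m i * a i) (𝓝 0) (𝓝 0) := by
      have : Continuous fun r : ℝ => r ^ m i * a i := by fun_prop
      simpa [(hm i).ne'] using this.tendsto 0
    exact (this.mono_left nhdsWithin_le_nhds).eventually (ge_mem_nhds (hb i))
  obtain ⟨r, hr, hrpos⟩ := ((eventually_all.2 h).and self_mem_nhdsWithin).exists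
  exact ⟨r, hrpos, hr⟩

lemma LinearMap.measureReal_image_pos {E F : Type*} [NormedAddCommGroup E] [NormedSpace ℝ E]
    [FiniteDimensional ℝ E] [NormedAddCommGroup F] [NormedSpace ℝ F] [FiniteDimensional ℝ F]
    [MeasurableSpace F] (μ : Measure F) [μ.IsOpenPosMeasure] [IsFiniteMeasureOnCompacts μ]
    (f : E →ₗ[ℝ] F) (hf : Function.Surjective f) {s : Set E} (hs : IsCompact s) {x : E}
    (hx : s ∈ 𝓝 x) : 0 < μ.real (f '' s) :=
  ENNReal.toReal_pos
    (μ.measure_pos_of_mem_nhds ((f.isOpenMap_of_finiteDimensional hf).image_mem_nhds hx)).ne'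
    (hs.image f.continuous_of_finiteDimensional).measure_lt_top.ne

section Polytope

variable {d n : ℕ} {dj : Fin n → ℕ} {L : (j : Fin n) → (Fin d → ℝ) →ₗ[ℝ] (Fin (dj j) → ℝ)}
  {s : Fin n → ℝ}

lemma le_dim_of_mem_HBLpolytope (hdj : ∀ j, 0 < dj j) (hs : s ∈ HBLpolytope d n dj L)
    (j : Fin n) : s j ≤ d := by
  obtain ⟨hs0, hsum, -⟩ := hs
  calc s j ≤ s j * dj j := le_mul_of_one_le_right (hs0 j) (by exact_mod_cast hdj j)
    _ ≤ ∑ i, s i * dj i :=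
        Finset.single_le_sum (fun i _ => mul_nonneg (hs0 i) (Nat.cast_nonneg _))
          (Finset.mem_univ j)
    _ = d := hsum

lemma prod_pow_rpow_of_mem_HBLpolytope (hs : s ∈ HBLpolytope d n dj L) {r : ℝ}
    (hr : 0 < r) : ∏ j, (r ^ dj j) ^ s j = r ^ d := by
  simp_rw [← Real.rpow_natCast, ← Real.rpow_mul hr.le]
  rw [← Real.rpow_sum_of_pos hr, ← hs.2.1]
  simp_rw [mul_comm]

lemma prod_rpow_le_of_mem_HBLpolytope (hdj : ∀ j, 0 < dj j) (hs : s ∈ HBLpolytope d n dj L)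
    {a : Fin n → ℝ} (ha : ∀ j, 0 ≤ a j) : ∏ j, a j ^ s j ≤ ∏ j, max (a j) 1 ^ d := by
  refine Finset.prod_le_prod (fun j _ => Real.rpow_nonneg (ha j) _) fun j _ => ?_
  calc a j ^ s j ≤ max (a j) 1 ^ s j := Real.rpow_le_rpow (ha j) (le_max_left _ _) (hs.1 j)
    _ ≤ max (a j) 1 ^ (d : ℝ) :=
        Real.rpow_le_rpow_of_exponent_le (le_max_right _ _) (le_dim_of_mem_HBLpolytope hdj hs j)
    _ = max (a j) 1 ^ d := Real.rpow_natCast _ d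

lemma infProdRpow_nonneg (P : Set (Fin n → ℝ)) {lam : Fin n → ℝ} (hlam : ∀ j, 0 ≤ lam j) :
    0 ≤ infProdRpow P lam :=
  Real.sInf_nonneg <| Set.forall_mem_image.2 fun _ _ =>
    Finset.prod_nonneg fun j _ => Real.rpow_nonneg (hlam j) _

lemma infProdRpow_le_mul (hdj : ∀ j, 0 < dj j) {lam : Fin n → ℝ} (hlam : ∀ j, 0 ≤ lam j)
    {r : ℝ} (hr : 0 < r) {a : Fin n → ℝ} (ha : ∀ j, 0 < a j) :
    infProdRpow (HBLpolytope d n dj L) lam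
      ≤ r ^ d * (∏ j, max (a j) 1 ^ d) *
        infProdRpow (HBLpolytope d n dj L) fun j => lam j / (r ^ dj j * a j) := by
  have hβ : ∀ j, 0 < r ^ dj j * a j := fun j => mul_pos (pow_pos hr _) (ha j)
  refine sInf_image_le_mul_sInf_image (by positivity)
    (fun s _ => Finset.prod_nonneg fun j _ => Real.rpow_nonneg (hlam j) _) fun s hs => ?_
  calc ∏ j, lam j ^ s j
      = (∏ j, (r ^ dj j) ^ s j) * (∏ j, a j ^ s j) *
          ∏ j, (lam j / (r ^ dj j * a j)) ^ s j := by
        simp_rw [← Finset.prod_mul_distrib, ← Real.mul_rpow (pow_nonneg hr.le _) (ha _).le,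
          ← Real.mul_rpow (hβ _).le (div_nonneg (hlam _) (hβ _).le),
          mul_div_cancel₀ _ (hβ _).ne']
    _ ≤ r ^ d * (∏ j, max (a j) 1 ^ d) * ∏ j, (lam j / (r ^ dj j * a j)) ^ s j := by
        rw [prod_pow_rpow_of_mem_HBLpolytope hs hr]
        gcongr r ^ d * ?_ * _
        · exact Finset.prod_nonneg fun j _ =>
            Real.rpow_nonneg (div_nonneg (hlam j) (hβ j).le) _
        · exact prod_rpow_le_of_mem_HBLpolytope hdj hs fun j => (ha j).le

end Polytope

section HBLInequality

variable {d n : ℕ} {dj : Fin n → ℕ}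

def HBLInequality (L : (j : Fin n) → (Fin d → ℝ) →ₗ[ℝ] (Fin (dj j) → ℝ))
    (B : (Fin n → ℝ) → ℝ) (C : ℝ) : Prop :=
  ∀ f : (j : Fin n) → (Fin (dj j) → ℝ) → ℝ,
    (∀ j, ∀ y, 0 ≤ f j y) → (∀ j, Integrable (f j)) →
    ∫⁻ x : Fin d → ℝ, ENNReal.ofReal (B (fun j => f j (L j x)))
      ≤ ENNReal.ofReal (C * B (fun j => ∫ y, f j y))

variable {L : (j : Fin n) → (Fin d → ℝ) →ₗ[ℝ] (Fin (dj j) → ℝ)} {B : (Fin n → ℝ) → ℝ}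

lemma HBLInequality.mono (hB0 : ∀ y : Fin n → ℝ, (∀ j, 0 ≤ y j) → 0 ≤ B y) {C C' : ℝ}
    (h : HBLInequality L B C) (hC : C ≤ C') : HBLInequality L B C' := fun f hf hfi =>
  (h f hf hfi).trans <| ENNReal.ofReal_le_ofReal <|
    mul_le_mul_of_nonneg_right hC (hB0 _ fun j => integral_nonneg (hf j))

lemma IsHBLFunction.exists_pos_hblInequality
    (hB0 : ∀ y : Fin n → ℝ, (∀ j, 0 ≤ y j) → 0 ≤ B y) (hB : IsHBLFunction d n dj L B) :
    ∃ C > 0, HBLInequality L B C :=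
  let ⟨C, hC⟩ := hB
  ⟨max C 1, by positivity, HBLInequality.mono hB0 hC (le_max_left C 1)⟩

lemma HBLInequality.measureReal_mul_le (hB0 : ∀ y : Fin n → ℝ, (∀ j, 0 ≤ y j) → 0 ≤ B y)
    {C : ℝ} (hC : 0 ≤ C) (h : HBLInequality L B C) {K : Set (Fin d → ℝ)} (hK : IsCompact K)
    {t : Fin n → ℝ} (ht : ∀ j, 0 ≤ t j) :
    volume.real K * B t ≤ C * B (fun j => t j * volume.real (L j '' K)) := by
  have hLK : ∀ j, IsCompact (L j '' K) := fun j =>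
    hK.image (L j).continuous_of_finiteDimensional
  set f : (j : Fin n) → (Fin (dj j) → ℝ) → ℝ := fun j => (L j '' K).indicator fun _ => t j
  have hf0 : ∀ j y, 0 ≤ f j y := fun j => Set.indicator_nonneg fun _ _ => ht j
  have hfi : ∀ j, Integrable (f j) := fun j =>
    (integrable_indicator_iff (hLK j).measurableSet).2
      (integrableOn_const (hLK j).measure_lt_top.ne)
  have hf_integral : (fun j => ∫ y, f j y) = fun j => t j * volume.real (L j '' K) := by
    ext j
    rw [integral_indicator_const _ (hLK j).measurableSet, smul_eq_mul, mul_comm]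
  have hfK : ∀ x ∈ K, (fun j => f j (L j x)) = t := fun x hx =>
    funext fun j => Set.indicator_of_mem (Set.mem_image_of_mem _ hx) _
  refine (ENNReal.ofReal_le_ofReal_iff
    (mul_nonneg hC (hB0 _ fun j => mul_nonneg (ht j) measureReal_nonneg))).1 ?_
  calc ENNReal.ofReal (volume.real K * B t)
      = ∫⁻ _ in K, ENNReal.ofReal (B t) := by
        rw [setLIntegral_const, ENNReal.ofReal_mul measureReal_nonneg,
          ofReal_measureReal hK.measure_lt_top.ne, mul_comm]
    _ = ∫⁻ x in K, ENNReal.ofReal (B fun j => f j (L j x)) :=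
        setLIntegral_congr_fun hK.measurableSet fun x hx => by rw [hfK x hx]
    _ ≤ ∫⁻ x, ENNReal.ofReal (B fun j => f j (L j x)) := setLIntegral_le_lintegral _ _
    _ ≤ ENNReal.ofReal (C * B fun j => ∫ y, f j y) := h f hf0 hfi
    _ = _ := by rw [hf_integral]

lemma HBLInequality.exists_pow_mul_le (hB0 : ∀ y : Fin n → ℝ, (∀ j, 0 ≤ y j) → 0 ≤ B y)
    {C : ℝ} (hC : 0 ≤ C) (h : HBLInequality L B C) (hL : ∀ j, Function.Surjective (L j)) :
    ∃ v > 0, ∃ a : Fin n → ℝ, (∀ j, 0 < a j) ∧ ∀ {r : ℝ}, 0 ≤ r → ∀ {t : Fin n → ℝ},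
      (∀ j, 0 ≤ t j) → r ^ d * v * B t ≤ C * B (fun j => t j * (r ^ dj j * a j)) := by
  set K := Metric.closedBall (0 : Fin d → ℝ) 1
  have hK : IsCompact K := isCompact_closedBall 0 1
  have hK0 : K ∈ 𝓝 0 := Metric.closedBall_mem_nhds 0 one_pos
  refine ⟨volume.real K,
    ENNReal.toReal_pos (Metric.measure_closedBall_pos volume 0 one_pos).ne' hK.measure_lt_top.ne,
    fun j => volume.real (L j '' K),
    fun j => (L j).measureReal_image_pos volume (hL j) hK hK0, fun {r} hr {t} ht => ?_⟩
  simpa only [measureReal_def, image_smul_set, Measure.addHaar_smul_of_nonneg volume hr,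
    Module.finrank_fin_fun, ENNReal.toReal_mul, ENNReal.toReal_ofReal (pow_nonneg hr _)]
    using h.measureReal_mul_le hB0 hC (hK.smul r) ht

end HBLInequality

theorem stmt5_general (d n : ℕ) (dj : Fin n → ℕ) (hdj : ∀ j, 0 < dj j)
    (L : (j : Fin n) → (Fin d → ℝ) →ₗ[ℝ] (Fin (dj j) → ℝ))
    (hL : ∀ j, Function.Surjective (L j))
    (B : (Fin n → ℝ) → ℝ)
    (hBnonneg : ∀ y : Fin n → ℝ, (∀ j, 0 ≤ y j) → 0 ≤ B y)
    (hB : IsHBLFunction d n dj L B)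
    (c : ℝ) (hc : 0 < c)
    (hlower : ∀ lam y : Fin n → ℝ, (∀ j, 1 ≤ lam j) → (∀ j, 0 < y j) →
      c * sInf ((fun s : Fin n → ℝ => ∏ j, lam j ^ s j) '' HBLpolytope d n dj L) * B y
        ≤ B (fun j => lam j * y j)) :
    ∃ c' : ℝ, 0 < c' ∧ ∀ lam y : Fin n → ℝ, (∀ j, 0 < lam j) → (∀ j, 0 < y j) →
      c' * sInf ((fun s : Fin n → ℝ => ∏ j, lam j ^ s j) '' HBLpolytope d n dj L) * B y
        ≤ B (fun j => lam j * y j) := by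
  obtain ⟨C, hC, hHBL⟩ := hB.exists_pos_hblInequality hBnonneg
  obtain ⟨v, hv, a, ha, hscale⟩ := hHBL.exists_pow_mul_le hBnonneg hC.le hL
  set P := HBLpolytope d n dj L
  set M := ∏ j, max (a j) 1 ^ d
  have hM : 0 < M := Finset.prod_pos fun j _ => pow_pos (lt_max_of_lt_right one_pos) d
  refine ⟨c * v / (C * M), by positivity, fun lam y hlam hy => ?_⟩
  obtain ⟨r, hr, hra⟩ := exists_pos_pow_mul_le hdj a hlam
  set β : Fin n → ℝ := fun j => r ^ dj j * a j
  have hβ : ∀ j, 0 < β j := fun j => mul_pos (pow_pos hr _) (ha j)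
  set μ : Fin n → ℝ := fun j => lam j / β j
  have hμ : ∀ j, 1 ≤ μ j := fun j => (one_le_div (hβ j)).2 (hra j)
  have hlower' := hlower μ (fun j => y j * β j) hμ fun j => mul_pos (hy j) (hβ j)
  rw [show (fun j => μ j * (y j * β j)) = fun j => lam j * y j from
    funext fun j => by simp only [μ]; field_simp [(hβ j).ne']] at hlower'
  have hBy : 0 ≤ B y := hBnonneg y fun j => (hy j).le
  have hmμ := infProdRpow_nonneg P fun j => (hμ j).trans' zero_le_one
  calc c * v / (C * M) * infProdRpow P lam * B y
      ≤ c * v / (C * M) * (r ^ d * M * infProdRpow P μ) * B y := by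
        gcongr
        exact infProdRpow_le_mul hdj (fun j => (hlam j).le) hr ha
    _ = c * infProdRpow P μ * (r ^ d * v * B y) / C := by field_simp
    _ ≤ c * infProdRpow P μ * (C * B fun j => y j * β j) / C := by
        gcongr c * _ * ?_ / C
        exact hscale hr.le fun j => (hy j).le
    _ = c * infProdRpow P μ * B fun j => y j * β j := by field_simp
    _ ≤ B fun j => lam j * y j := hlower'

theorem stmt5 (d n : ℕ) (hd : 0 < d) (hn : 0 < n) (dj : Fin n → ℕ) (hdj : ∀ j, 0 < dj j)
    (L : (j : Fin n) → (Fin d → ℝ) →ₗ[ℝ] (Fin (dj j) → ℝ))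
    (hL : ∀ j, Function.Surjective (L j))
    (hP : (HBLpolytope d n dj L).Nonempty)
    (B : (Fin n → ℝ) → ℝ) (hBmeas : Measurable B)
    (hBnonneg : ∀ y : Fin n → ℝ, (∀ j, 0 ≤ y j) → 0 ≤ B y)
    (hB : IsHBLFunction d n dj L B)
    (c : ℝ) (hc : 0 < c)
    (hlower : ∀ lam y : Fin n → ℝ, (∀ j, 1 ≤ lam j) → (∀ j, 0 < y j) →
      c * sInf ((fun s : Fin n → ℝ => ∏ j, lam j ^ s j) '' HBLpolytope d n dj L) * B y
        ≤ B (fun j => lam j * y j)) :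
    ∃ c' : ℝ, 0 < c' ∧ ∀ lam y : Fin n → ℝ, (∀ j, 0 < lam j) → (∀ j, 0 < y j) →
      c' * sInf ((fun s : Fin n → ℝ => ∏ j, lam j ^ s j) '' HBLpolytope d n dj L) * B y
        ≤ B (fun j => lam j * y j) :=
  stmt5_general d n dj hdj L hL B hBnonneg hB c hc hlower
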